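/- arXiv:2205.11968 — 4 statements merged into one kernel-verified Lean document; each statement's English description precedes it below -/
import Mathlib

section
/- Define g(η) = 1 − 2 f(η)(f(η) + η) where f(η) = (1/√π) · exp(−η²)/(1 + erf(η)). Then g is strictly increasing on [0, ∞). -/
open Real

noncomputable def erf (z : ℝ) : ℝ := (2 / Real.sqrt π) * ∫ s in (0:ℝ)..z, Real.exp (-s^2)

noncomputable def f (η : ℝ) : ℝ := (1 / Real.sqrt π) * Real.exp (-η^2) / (1 + erf η)

noncomputable def g (η : ℝ) : ℝ := 1 - 2 * f η * (f η + η)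

noncomputable def hfun (η : ℝ) : ℝ := (f η + η) * (2 * f η + η)

/-!
Since `erf' = (2/√π) exp(-η²)`, the function `f` solves the Riccati equation
`f' = -2 f (f + η)`, so `g' = 2 f (2 (f + η)(2 f + η) - 1)`, and it suffices to show
`2 (f + η)(2 f + η) > 1` for `η > 0`. For `η ≥ 1` this is clear from `f > 0`. For `η < 1`,
the bounds `exp(-η²) ≥ 1 - η²` and `erf η ≤ 2η/√π` give `f (√π + 2η) ≥ 1 - η² > 0`, and
substituting this lower bound for `f` reduces the claim to
`4 - π + 2η√π + 2πη² + 2η³√π > 0`, which holds because `π < 4`.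
-/

lemma continuous_exp_neg_sq : Continuous fun s : ℝ => Real.exp (-s^2) := by fun_prop

lemma hasDerivAt_erf (z : ℝ) :
    HasDerivAt erf (2 / Real.sqrt π * Real.exp (-z^2)) z :=
  (intervalIntegral.integral_hasDerivAt_right (continuous_exp_neg_sq.intervalIntegrable 0 z)
    (continuous_exp_neg_sq.stronglyMeasurableAtFilter _ _)
    continuous_exp_neg_sq.continuousAt).const_mul _

lemma erf_nonneg {η : ℝ} (hη : 0 ≤ η) : 0 ≤ erf η := by
  have : 0 ≤ ∫ s in (0:ℝ)..η, Real.exp (-s^2) :=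
    intervalIntegral.integral_nonneg hη fun s _ => (Real.exp_pos _).le
  unfold erf
  positivity

lemma erf_le {η : ℝ} (hη : 0 ≤ η) : erf η ≤ 2 * η / Real.sqrt π := by
  have hint : (∫ s in (0:ℝ)..η, Real.exp (-s^2)) ≤ ∫ _ in (0:ℝ)..η, (1:ℝ) :=
    intervalIntegral.integral_mono_on hη (continuous_exp_neg_sq.intervalIntegrable 0 η)
      intervalIntegrable_const fun s _ => Real.exp_le_one_iff.mpr (neg_nonpos.mpr (sq_nonneg s))
  rw [intervalIntegral.integral_const, smul_eq_mul, mul_one, sub_zero] at hint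
  rw [erf, div_mul_eq_mul_div]
  gcongr

lemma one_add_erf_pos {η : ℝ} (hη : 0 ≤ η) : 0 < 1 + erf η := by
  linarith [erf_nonneg hη]

lemma f_pos {η : ℝ} (hη : 0 ≤ η) : 0 < f η := by
  have := one_add_erf_pos hη
  unfold f
  positivity

lemma hasDerivAt_f {η : ℝ} (hη : 1 + erf η ≠ 0) :
    HasDerivAt f (-2 * f η * (f η + η)) η := by
  have hnum : HasDerivAt (fun x => 1 / Real.sqrt π * Real.exp (-x^2))
      (1 / Real.sqrt π * (Real.exp (-η^2) * -(2 * η))) η := by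
    have := ((hasDerivAt_pow 2 η).neg).exp.const_mul (1 / Real.sqrt π)
    simpa using this
  refine (hnum.div ((hasDerivAt_erf η).const_add 1) hη).congr_deriv ?_
  unfold f
  field_simp
  ring

lemma hasDerivAt_g {η : ℝ} (hη : 1 + erf η ≠ 0) :
    HasDerivAt g (2 * f η * (2 * hfun η - 1)) η := by
  have hf := hasDerivAt_f hη
  refine ((hasDerivAt_const η 1).sub
    ((hf.const_mul 2).mul (hf.add (hasDerivAt_id' η)))).congr_deriv ?_
  simp only [Pi.add_apply, hfun]
  ring

lemma one_sub_sq_le_f_mul {η : ℝ} (hη : 0 ≤ η) :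
    1 - η^2 ≤ f η * (Real.sqrt π + 2 * η) := by
  have hs : 0 < Real.sqrt π := Real.sqrt_pos.mpr Real.pi_pos
  have hD := one_add_erf_pos hη
  have hDs : (1 + erf η) * Real.sqrt π ≤ Real.sqrt π + 2 * η := by
    have := (le_div_iff₀ hs).mp (erf_le hη)
    linarith
  calc 1 - η^2 ≤ Real.exp (-η^2) := by linarith [Real.add_one_le_exp (-η^2)]
    _ = f η * ((1 + erf η) * Real.sqrt π) := by unfold f; field_simp
    _ ≤ f η * (Real.sqrt π + 2 * η) := mul_le_mul_of_nonneg_left hDs (f_pos hη).le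

lemma one_lt_two_mul_hfun {η : ℝ} (hη : 0 < η) : 1 < 2 * hfun η := by
  have hf := f_pos hη.le
  rcases le_or_gt 1 η with h1 | h1
  · unfold hfun
    nlinarith [mul_pos hf hη]
  set s := Real.sqrt π
  set F := f η
  have hs : 0 < s := Real.sqrt_pos.mpr Real.pi_pos
  have hs2 : s^2 < 4 := by rw [Real.sq_sqrt Real.pi_pos.le]; exact Real.pi_lt_four
  have hu : 1 - η^2 ≤ F * (s + 2 * η) := one_sub_sq_le_f_mul hη.le
  have hL : 0 ≤ 1 - η^2 := by nlinarith
  refine lt_of_mul_lt_mul_left ?_ (sq_nonneg (s + 2 * η))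
  calc (s + 2 * η)^2 * 1
      < 2 * (1 - η^2 + η * (s + 2 * η)) * (2 * (1 - η^2) + η * (s + 2 * η)) := by
        nlinarith [mul_pos hη hs, mul_pos (mul_pos hη hη) (mul_pos hη hs), mul_pos hη hη]
    _ ≤ 2 * (F * (s + 2 * η) + η * (s + 2 * η)) * (2 * (F * (s + 2 * η)) + η * (s + 2 * η)) := by
        gcongr
    _ = (s + 2 * η)^2 * (2 * hfun η) := by unfold hfun; ring

theorem stmt1 : StrictMonoOn g (Set.Ici (0:ℝ)) := by
  have hg : ∀ η ∈ Set.Ici (0:ℝ), HasDerivAt g (2 * f η * (2 * hfun η - 1)) η :=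
    fun η hη => hasDerivAt_g (one_add_erf_pos hη).ne'
  refine strictMonoOn_of_hasDerivWithinAt_pos (convex_Ici 0)
    (fun η hη => (hg η hη).continuousAt.continuousWithinAt)
    (fun η hη => (hg η (interior_subset hη)).hasDerivWithinAt) fun η hη => ?_
  rw [interior_Ici] at hη
  exact mul_pos (mul_pos two_pos (f_pos hη.le)) (sub_pos.mpr (one_lt_two_mul_hfun hη))
end

section
/- Define g(η) = 1 − 2 f(η)(f(η) + η) with f(η) = (1/√π) · exp(−η²)/(1 + erf(η)). Then for all η ≥ 0, 1 − 2/π ≤ g(η) < 1. -/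
open Real

lemma key_alg (s u η E : ℝ) (hsl : 1.77 ≤ s) (hsu : s ≤ 1.78)
    (hη : 0 ≤ η) (hu0 : 0 < u) (hu1 : u ≤ 1) (ht : η*u ≤ 1/2)
    (hE : s + 2*(η*u) ≤ s*E) :
    u^2 + s*η*u*E ≤ E^2 := by
  have ht0 : 0 ≤ η*u := mul_nonneg hη hu0.le
  have hs0 : (0:ℝ) < s := by linarith
  have hfac : 0 ≤ (s*E - (s+2*(η*u))) * ((s*E + (s+2*(η*u))) - s^2*(η*u)) := by
    apply mul_nonneg (by linarith)
    nlinarith [mul_le_mul_of_nonneg_left ht (sq_nonneg s)]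
  have e1 : 0 ≤ (η*u)*(4*s - s^3 + 2 - s^2) := mul_nonneg ht0 (by nlinarith)
  have e2 : 0 ≤ ((η*u)/2 - (η*u)^2)*(2*s^2 - 4) :=
    mul_nonneg (by nlinarith) (by nlinarith)
  have e3 : 0 ≤ s^2*(1 - u^2) := mul_nonneg (sq_nonneg s) (by nlinarith)
  have hquad : (0:ℝ) ≤ (s+2*(η*u))^2 - s^2*(η*u)*(s+2*(η*u)) - s^2*u^2 := by
    nlinarith [e1, e2, e3]
  have h : s^2*u^2 + s^2*((η*u)*(s*E)) ≤ (s*E)^2 := by nlinarith [hfac, hquad]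
  nlinarith [h, mul_pos hs0 hs0]

lemma integral_ge (η : ℝ) (hη : 0 ≤ η) :
    η * Real.exp (-η^2) ≤ ∫ s in (0:ℝ)..η, Real.exp (-s^2) := by
  have h1 : ∫ _ in (0:ℝ)..η, Real.exp (-η^2) ≤ ∫ s in (0:ℝ)..η, Real.exp (-s^2) := by
    apply intervalIntegral.integral_mono_on hη intervalIntegrable_const
      ((Continuous.intervalIntegrable (by continuity) _ _))
    intro x hx
    apply Real.exp_le_exp.mpr
    nlinarith [hx.1, hx.2]
  simpa using h1

theorem stmt2 : ∀ η : ℝ, 0 ≤ η → 1 - 2 / π ≤ g η ∧ g η < 1 := by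
  intro η hη
  set s := Real.sqrt π with hsdef
  set u := Real.exp (-η^2) with hudef
  have hs2 : s^2 = π := Real.sq_sqrt pi_pos.le
  have hsu : s ≤ 1.78 := by
    rw [hsdef, show (1.78:ℝ) = Real.sqrt (1.78^2) by rw [Real.sqrt_sq]; norm_num]
    apply Real.sqrt_le_sqrt; nlinarith [Real.pi_lt_d2]
  have hsl : (1.77:ℝ) ≤ s := by
    rw [hsdef, show (1.77:ℝ) = Real.sqrt (1.77^2) by rw [Real.sqrt_sq]; norm_num]
    apply Real.sqrt_le_sqrt; nlinarith [Real.pi_gt_d6]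
  have hs0 : (0:ℝ) < s := by linarith
  have hu0 : 0 < u := Real.exp_pos _
  have hu1 : u ≤ 1 := Real.exp_le_one_iff.mpr (neg_nonpos.mpr (sq_nonneg η))
  have hinv : u * Real.exp (η^2) = 1 := by
    rw [hudef, ← Real.exp_add]; simp
  have ht : η * u ≤ 1/2 := by
    nlinarith [Real.add_one_le_exp (η^2), mul_nonneg hu0.le (sq_nonneg (η - 1)),
      mul_le_mul_of_nonneg_left (Real.add_one_le_exp (η^2)) hu0.le]
  have hηu0 : 0 ≤ η * u := mul_nonneg hη hu0.le
  have hintge := integral_ge η hη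
  have herfge : 2/s * (η * u) ≤ erf η := by
    rw [erf]
    exact mul_le_mul_of_nonneg_left hintge (by positivity)
  have herf0 : 0 ≤ erf η := le_trans (by positivity) herfge
  set E := 1 + erf η with hEdef
  have hE1 : (1:ℝ) ≤ E := by rw [hEdef]; linarith
  have hE0 : (0:ℝ) < E := by linarith
  have hE : s + 2*(η*u) ≤ s*E := by
    have h1 : s * (2/s * (η*u)) ≤ s * erf η := mul_le_mul_of_nonneg_left herfge hs0.le
    have h2 : s * (2/s * (η*u)) = 2*(η*u) := by field_simp
    rw [hEdef]
    nlinarith [h1, h2]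
  have key := key_alg s u η E hsl hsu hη hu0 hu1 ht hE
  have hfval : f η = u / (s * E) := by
    rw [f, ← hsdef, ← hudef, ← hEdef, one_div_mul_eq_div, div_div]
  have hf0 : 0 < f η := by rw [hfval]; positivity
  constructor
  · have expand : f η * (f η + η) = (u^2 + s*η*u*E) / (s^2 * E^2) := by
      rw [hfval]; field_simp
    have h2 : f η * (f η + η) ≤ 1/π := by
      rw [expand, div_le_div_iff₀ (by positivity) pi_pos, ← hs2]
      nlinarith [mul_le_mul_of_nonneg_left key (sq_nonneg s)]
    rw [g]
    have h3 : 2 * f η * (f η + η) ≤ 2 * (1/π) := by nlinarith [h2]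
    have h4 : 2 * (1/π) = 2/π := by ring
    linarith [h3, h4]
  · have hpos : 0 < f η * (f η + η) := mul_pos hf0 (by linarith)
    rw [g]
    nlinarith [hpos]
end

section
/- The function η ↦ (f(η) + η)² / g(η), with f(η) = (1/√π) · exp(−η²)/(1 + erf(η)) and g(η) = 1 − 2 f(η)(f(η) + η), is monotone increasing on [0, ∞); consequently 1 − 2(f(η)+η)²/g(η) ≤ 1 − (2/π)/(1 − 2/π) = (π − 4)/(π − 2) for all η ≥ 0. -/
open Real

/-!
Write `m = 1 / f = √π e^{η²} (1 + erf η)`, which solves `m' = 2ηm + 2`, and `u = f + η`.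
Then `f' = -2fu` and `u' = g`, so the derivative of `u² / g` is
`2u (g² + fgu - 2fu³) / g²`, whose bracket is `Q(η, m) / m⁴` for an explicit polynomial `Q`.
Comparison with the ODE bounds `m` below by a quartic polynomial in `η`, and substituting this
bound into `Q` leaves a polynomial with nonnegative coefficients.
The value `u(0)² / g(0) = 1 / (π - 2)` then gives the inequality.
-/

open scoped NNReal

lemma erf_hasDerivAt (x : ℝ) : HasDerivAt erf (2 / √π * exp (-x ^ 2)) x :=
  ((Continuous.integral_hasStrictDerivAt (by fun_prop) 0 x).hasDerivAt).const_mul _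

lemma hasDerivAt_exp_neg_sq (x : ℝ) :
    HasDerivAt (fun y ↦ exp (-y ^ 2)) (exp (-x ^ 2) * (-(2 * x))) x := by
  simpa using ((hasDerivAt_pow 2 x).neg).exp

lemma erf_zero : erf 0 = 0 := by simp [erf]

lemma erf_nonneg_s7 {x : ℝ} (hx : 0 ≤ x) : 0 ≤ erf x :=
  mul_nonneg (by positivity) (intervalIntegral.integral_nonneg hx fun _ _ ↦ (exp_pos _).le)

lemma one_add_erf_pos_s7 {x : ℝ} (hx : 0 ≤ x) : 0 < 1 + erf x := by
  linarith [erf_nonneg_s7 hx]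

noncomputable def fRecip (η : ℝ) : ℝ := √π * exp (η ^ 2) * (1 + erf η)

lemma fRecip_pos {x : ℝ} (hx : 0 ≤ x) : 0 < fRecip x := by
  have := one_add_erf_pos_s7 hx
  unfold fRecip; positivity

lemma f_eq_inv_fRecip (x : ℝ) : f x = (fRecip x)⁻¹ := by
  rw [f, fRecip, exp_neg]
  field_simp

lemma le_fRecip_of_subsolution {P P' : ℝ → ℝ} (hP : ∀ y, HasDerivAt P (P' y) y)
    (h0 : P 0 ≤ √π) (hsub : ∀ y, 0 < y → P' y ≤ 2 * y * P y + 2) {x : ℝ} (hx : 0 ≤ x) :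
    P x ≤ fRecip x := by
  -- `(fRecip - P) e^{-η²}` is nondecreasing
  set φ : ℝ → ℝ := fun y ↦ √π * (1 + erf y) - P y * exp (-y ^ 2)
  have hφ (y : ℝ) : HasDerivAt φ ((2 * y * P y + 2 - P' y) * exp (-y ^ 2)) y := by
    refine ((((erf_hasDerivAt y).const_add 1).const_mul √π).sub
      ((hP y).mul (hasDerivAt_exp_neg_sq y))).congr_deriv ?_
    field_simp
    ring
  have hmono : MonotoneOn φ (Set.Ici 0) := by
    refine monotoneOn_of_hasDerivWithinAt_nonneg (convex_Ici 0)
      (fun y _ ↦ (hφ y).continuousAt.continuousWithinAt)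
      (fun y _ ↦ (hφ y).hasDerivWithinAt) fun y hy ↦ ?_
    rw [interior_Ici] at hy
    exact mul_nonneg (sub_nonneg.2 (hsub y hy)) (exp_pos _).le
  have hφx : P x * exp (-x ^ 2) ≤ √π * (1 + erf x) := by
    have := hmono Set.self_mem_Ici hx hx
    norm_num [φ, erf_zero] at this
    linarith
  calc P x = P x * exp (-x ^ 2) * exp (x ^ 2) := by rw [exp_neg]; field_simp
    _ ≤ √π * (1 + erf x) * exp (x ^ 2) := mul_le_mul_of_nonneg_right hφx (exp_pos _).le
    _ = fRecip x := by rw [fRecip]; ring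

/-- The Taylor coefficients `√π, 2, √π, 4/3, √π/2` of `fRecip` at `0`, rounded down. -/
noncomputable def fRecipLowerBound (η : ℝ) : ℝ :=
  1.77 + 2 * η + 1.77 * η ^ 2 + 4 / 3 * η ^ 3 + 22 / 25 * η ^ 4

lemma fRecipLowerBound_le {x : ℝ} (hx : 0 ≤ x) : fRecipLowerBound x ≤ fRecip x := by
  refine le_fRecip_of_subsolution (P' := fun y ↦ 2 + 3.54 * y + 4 * y ^ 2 + 3.52 * y ^ 3)
    (fun y ↦ ?_) ?_ (fun y hy ↦ ?_) hx
  · unfold fRecipLowerBound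
    refine ((((hasDerivAt_id y).const_mul 2).const_add 1.77).add
      ((hasDerivAt_pow 2 y).const_mul 1.77) |>.add ((hasDerivAt_pow 3 y).const_mul (4 / 3))
      |>.add ((hasDerivAt_pow 4 y).const_mul (22 / 25))).congr_deriv ?_
    norm_num
    ring
  · have : (1.77 : ℝ) ^ 2 ≤ π := by linarith [pi_gt_d2]
    simpa [fRecipLowerBound] using le_sqrt_of_sq_le this
  · unfold fRecipLowerBound
    nlinarith [pow_pos hy 4, pow_pos hy 5]

lemma sq_sub_two_mul_sub_two_pos {e m : ℝ} (he : 0 ≤ e) (hm : fRecipLowerBound e ≤ m) :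
    0 < m ^ 2 - 2 * e * m - 2 := by
  obtain ⟨t, ht, rfl⟩ : ∃ t, 0 ≤ t ∧ m = fRecipLowerBound e + t :=
    ⟨_, sub_nonneg.2 hm, by ring⟩
  lift e to ℝ≥0 using he
  lift t to ℝ≥0 using ht
  unfold fRecipLowerBound
  ring_nf
  positivity

lemma key_polynomial_nonneg {e m : ℝ} (he : 0 ≤ e) (hm : fRecipLowerBound e ≤ m) :
    0 ≤ (m ^ 2 - 2 * e * m - 2) ^ 2 + (1 + e * m) * (m ^ 2 - 2 * e * m - 2)
      - 2 * (1 + e * m) ^ 3 := by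
  obtain ⟨t, ht, rfl⟩ : ∃ t, 0 ≤ t ∧ m = fRecipLowerBound e + t :=
    ⟨_, sub_nonneg.2 hm, by ring⟩
  lift e to ℝ≥0 using he
  lift t to ℝ≥0 using ht
  unfold fRecipLowerBound
  ring_nf
  positivity

lemma f_pos_s7 {x : ℝ} (hx : 0 ≤ x) : 0 < f x := by
  rw [f_eq_inv_fRecip]
  exact inv_pos.2 (fRecip_pos hx)

lemma g_pos {x : ℝ} (hx : 0 ≤ x) : 0 < g x := by
  have hm := fRecip_pos hx
  have hA := sq_sub_two_mul_sub_two_pos hx (fRecipLowerBound_le hx)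
  have : g x = (fRecip x ^ 2 - 2 * x * fRecip x - 2) / fRecip x ^ 2 := by
    rw [g, f_eq_inv_fRecip]
    field_simp
    ring
  rw [this]
  positivity

lemma deriv_numerator_nonneg {x : ℝ} (hx : 0 ≤ x) :
    0 ≤ g x ^ 2 + f x * g x * (f x + x) - 2 * f x * (f x + x) ^ 3 := by
  have hm := fRecip_pos hx
  have hQ := key_polynomial_nonneg hx (fRecipLowerBound_le hx)
  have hf := f_eq_inv_fRecip x
  set m := fRecip x
  have : g x ^ 2 + f x * g x * (f x + x) - 2 * f x * (f x + x) ^ 3 =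
      ((m ^ 2 - 2 * x * m - 2) ^ 2 + (1 + x * m) * (m ^ 2 - 2 * x * m - 2)
        - 2 * (1 + x * m) ^ 3) / m ^ 4 := by
    rw [g, hf]
    field_simp
    ring
  rw [this]
  positivity

lemma f_hasDerivAt {x : ℝ} (hx : 0 ≤ x) : HasDerivAt f (-2 * f x * (f x + x)) x := by
  have hD := (one_add_erf_pos_s7 hx).ne'
  refine (((hasDerivAt_exp_neg_sq x).const_mul (1 / √π)).div ((erf_hasDerivAt x).const_add 1) hD :
    HasDerivAt f _ x).congr_deriv ?_
  simp only [f]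
  field_simp
  ring

lemma hasDerivAt_sq_f_add_id_div_g {x : ℝ} (hx : 0 ≤ x) :
    HasDerivAt (fun η ↦ (f η + η) ^ 2 / g η)
      (2 * (f x + x) * (g x ^ 2 + f x * g x * (f x + x) - 2 * f x * (f x + x) ^ 3) / g x ^ 2) x := by
  have hu : HasDerivAt (fun η ↦ f η + η) (g x) x :=
    ((f_hasDerivAt hx).add (hasDerivAt_id x)).congr_deriv (by rw [g]; ring)
  have hg : HasDerivAt g (-(2 * (-2 * f x * (f x + x)) * (f x + x) + 2 * f x * g x)) x :=
    ((f_hasDerivAt hx).const_mul 2).mul hu |>.const_sub 1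
  have hg0 := (g_pos hx).ne'
  refine ((hu.pow 2).div hg hg0).congr_deriv ?_
  simp only [Pi.pow_apply]
  field_simp
  ring

lemma sq_f_add_id_div_g_zero : (f 0 + 0) ^ 2 / g 0 = 1 / (π - 2) := by
  have hf0 : f 0 = 1 / √π := by simp [f, erf_zero]
  have hπ : π - 2 ≠ 0 := by linarith [pi_gt_three]
  rw [g, hf0, add_zero]
  field_simp
  rw [sq_sqrt pi_pos.le, div_self hπ]

lemma monotoneOn_sq_f_add_id_div_g :
    MonotoneOn (fun η ↦ (f η + η) ^ 2 / g η) (Set.Ici 0) := by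
  refine monotoneOn_of_hasDerivWithinAt_nonneg (convex_Ici 0)
    (fun x hx ↦ (hasDerivAt_sq_f_add_id_div_g hx).continuousAt.continuousWithinAt)
    (fun x hx ↦ (hasDerivAt_sq_f_add_id_div_g (interior_subset hx)).hasDerivWithinAt)
    fun x hx ↦ ?_
  rw [interior_Ici] at hx
  have := f_pos_s7 hx.le
  have := deriv_numerator_nonneg hx.le
  have : 0 ≤ f x + x := by linarith [Set.mem_Ioi.1 hx]
  positivity

theorem stmt7 : MonotoneOn (fun η => (f η + η)^2 / g η) (Set.Ici (0:ℝ)) ∧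
    ∀ η : ℝ, 0 ≤ η → 1 - 2 * (f η + η)^2 / g η ≤ (π - 4) / (π - 2) := by
  have hmono := monotoneOn_sq_f_add_id_div_g
  refine ⟨hmono, fun η hη ↦ ?_⟩
  have h0 := hmono Set.self_mem_Ici hη hη
  simp only [sq_f_add_id_div_g_zero] at h0
  have hπ : π - 2 ≠ 0 := by linarith [pi_gt_three]
  have : (π - 4) / (π - 2) = 1 - 2 * (1 / (π - 2)) := by field_simp; ring
  rw [this, mul_div_assoc]
  linarith
end

section
/- Let κ > 0, Φ₀ ≥ 0, L > 0, d ≥ 1, with ρ̄ = Φ₀/L^d + √2 exp(−(κ/2)Φ₀²)/(L^d √(πκ)(1 + erf(Φ₀√κ/√2))) the mean of the truncated Gaussian stationary state. Then 1/L^d − L^d ρ̄ (ρ̄ − Φ₀/L^d) κ = (1/L^d) g(√(κ/2) Φ₀), where g(η) = 1 − 2 f(η)(f(η) + η) and f(η) = (1/√π) exp(−η²)/(1 + erf(η)). In particular, 1/L^d − L^d ρ̄ (ρ̄ − Φ₀/L^d) κ > 0. -/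
/-!
With η = √(κ/2) Φ₀ the mean is ρ̄ = Φ₀/L^d + √2 f(η)/(√κ L^d), and the identity is then
pure algebra in √2 and √κ. For positivity, erf η ≥ 0 and 1 + η² ≤ exp η² give
f(η) ≤ 1/(√π (1 + η²)), and with π > 3 the inequality 2 f (f + η) < 1 reduces to a polynomial
inequality in η.
-/

open Real MeasureTheory

theorem erf_nonneg_s12 {z : ℝ} (hz : 0 ≤ z) : 0 ≤ erf z :=
  mul_nonneg (by positivity)
    (intervalIntegral.integral_nonneg hz fun _ _ => (Real.exp_pos _).le)

theorem f_nonneg {η : ℝ} (hη : 0 ≤ η) : 0 ≤ f η := by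
  have := erf_nonneg_s12 hη
  unfold f
  positivity

theorem f_mul_le_one {η : ℝ} (hη : 0 ≤ η) : f η * (√π * (1 + η ^ 2)) ≤ 1 := by
  have hπ : √π ≠ 0 := (Real.sqrt_pos.2 Real.pi_pos).ne'
  have hf : f η * √π ≤ Real.exp (-η ^ 2) := by
    have hdiv : f η * √π = Real.exp (-η ^ 2) / (1 + erf η) := by
      rw [f]; field_simp
    rw [hdiv]
    exact div_le_self (Real.exp_pos _).le (by linarith [erf_nonneg_s12 hη])
  calc f η * (√π * (1 + η ^ 2)) = f η * √π * (1 + η ^ 2) := by ring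
    _ ≤ Real.exp (-η ^ 2) * Real.exp (η ^ 2) := by
      gcongr; linarith [Real.add_one_le_exp (η ^ 2)]
    _ = 1 := by rw [← Real.exp_add, neg_add_cancel, Real.exp_zero]

theorem two_mul_mul_add_lt_one {p x s : ℝ} (hx : 0 ≤ x) (hs : 0 < s) (hs3 : 3 ≤ s ^ 2)
    (hp : 0 ≤ p) (hps : p * (s * (1 + x ^ 2)) ≤ 1) : 2 * p * (p + x) < 1 := by
  set u := 1 + x ^ 2
  have key : 2 + 2 * s * x * u < (s * u) ^ 2 := by
    have hsu : 3 * (1 + 2 * x ^ 2) ≤ (s * u) ^ 2 := by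
      rw [mul_pow]; nlinarith [sq_nonneg x, sq_nonneg u]
    -- AM-GM: 2 s x u ≤ (s u)² / 4 + 4 x², and the remaining (3/4)(s u)² ≥ 9/4 (1 + 2 x²) wins
    nlinarith [sq_nonneg (s * u / 2 - 2 * x), sq_nonneg x]
  have hq : 0 ≤ p * (s * u) := by positivity
  have hsxu : 0 ≤ s * x * u := by positivity
  have hlt : 2 * p * (p + x) * (s * u) ^ 2 < 1 * (s * u) ^ 2 :=
    calc 2 * p * (p + x) * (s * u) ^ 2
          = 2 * (p * (s * u)) ^ 2 + 2 * (p * (s * u)) * (s * x * u) := by ring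
      _ ≤ 2 + 2 * s * x * u := by nlinarith [mul_le_mul_of_nonneg_right hps hsxu]
      _ < 1 * (s * u) ^ 2 := by rw [one_mul]; exact key
  exact lt_of_mul_lt_mul_right hlt (by positivity)

theorem g_pos_s12 {η : ℝ} (hη : 0 ≤ η) : 0 < g η := by
  have hπ : 3 ≤ √π ^ 2 := by rw [Real.sq_sqrt Real.pi_pos.le]; exact Real.pi_gt_three.le
  have := two_mul_mul_add_lt_one hη (Real.sqrt_pos.2 Real.pi_pos) hπ (f_nonneg hη)
    (f_mul_le_one hη)
  unfold g
  linarith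

theorem truncGaussMean_eq (κ Φ A : ℝ) (hκ : 0 ≤ κ) :
    Φ / A + √2 * Real.exp (-(κ / 2) * Φ ^ 2) / (A * √(π * κ) * (1 + erf (Φ * √κ / √2)))
      = Φ / A + √2 * f (√(κ / 2) * Φ) / (√κ * A) := by
  have harg : Φ * √κ / √2 = √(κ / 2) * Φ := by
    rw [Real.sqrt_div' _ (by norm_num : (0:ℝ) ≤ 2)]; ring
  have hexp : -(κ / 2) * Φ ^ 2 = -(√(κ / 2) * Φ) ^ 2 := by
    rw [mul_pow, Real.sq_sqrt (by positivity)]; ring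
  rw [harg, hexp, Real.sqrt_mul Real.pi_pos.le, f]
  generalize 1 + erf (√(κ / 2) * Φ) = E
  ring

theorem one_div_sub_eq_mul_one_sub (κ A Φ F : ℝ) (hκ : 0 < κ) (hA : A ≠ 0) :
    1 / A - A * (Φ / A + √2 * F / (√κ * A)) * (Φ / A + √2 * F / (√κ * A) - Φ / A) * κ
      = 1 / A * (1 - 2 * F * (F + √(κ / 2) * Φ)) := by
  have h2 : √2 ^ 2 = 2 := Real.sq_sqrt (by norm_num)
  have hκ2 : √κ ^ 2 = κ := Real.sq_sqrt hκ.le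
  rw [Real.sqrt_div' _ (by norm_num : (0:ℝ) ≤ 2)]
  field_simp
  linear_combination (2 * √2 * F ^ 2 + 2 * √κ * Φ * F) * hκ2
    - (√κ * Φ * F * κ + √2 * F ^ 2 * κ) * h2

theorem stmt12_general (κ Φ₀ L : ℝ) (d : ℕ) (hκ : 0 < κ) (hΦ : 0 ≤ Φ₀) (hL : 0 < L)
    (ρbar : ℝ)
    (hρbar : ρbar = Φ₀ / L^d +
      Real.sqrt 2 * Real.exp (-(κ/2) * Φ₀^2) /
        (L^d * Real.sqrt (π * κ) * (1 + erf (Φ₀ * Real.sqrt κ / Real.sqrt 2)))) :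
    1 / L^d - L^d * ρbar * (ρbar - Φ₀ / L^d) * κ = (1 / L^d) * g (Real.sqrt (κ / 2) * Φ₀) ∧
    0 < 1 / L^d - L^d * ρbar * (ρbar - Φ₀ / L^d) * κ := by
  have hA : 0 < L ^ d := pow_pos hL d
  have hident : 1 / L^d - L^d * ρbar * (ρbar - Φ₀ / L^d) * κ
      = (1 / L^d) * g (Real.sqrt (κ / 2) * Φ₀) := by
    rw [hρbar, truncGaussMean_eq κ Φ₀ _ hκ.le, one_div_sub_eq_mul_one_sub κ _ Φ₀ _ hκ hA.ne', g]
  refine ⟨hident, ?_⟩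
  have := g_pos_s12 (by positivity : 0 ≤ √(κ / 2) * Φ₀)
  rw [hident]
  positivity

theorem stmt12 (κ Φ₀ L : ℝ) (d : ℕ) (hκ : 0 < κ) (hΦ : 0 ≤ Φ₀) (hL : 0 < L) (hd : 1 ≤ d)
    (ρbar : ℝ)
    (hρbar : ρbar = Φ₀ / L^d +
      Real.sqrt 2 * Real.exp (-(κ/2) * Φ₀^2) /
        (L^d * Real.sqrt (π * κ) * (1 + erf (Φ₀ * Real.sqrt κ / Real.sqrt 2)))) :
    1 / L^d - L^d * ρbar * (ρbar - Φ₀ / L^d) * κ = (1 / L^d) * g (Real.sqrt (κ / 2) * Φ₀) ∧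
    0 < 1 / L^d - L^d * ρbar * (ρbar - Φ₀ / L^d) * κ :=
  stmt12_general κ Φ₀ L d hκ hΦ hL ρbar hρbar
end
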